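/- arXiv:2312.01986 — 2 statements merged into one kernel-verified Lean document; each statement's English description precedes it below -/
import Mathlib

section
/- Let (X, μ) be a measure space with 0 < μ(X) < ∞. Let (f_k)_{k∈ℕ} be a sequence of non-negative μ-measurable functions on X, and let (a_k)_{k∈ℕ}, (φ_k)_{k∈ℕ} be sequences of real numbers with 0 ≤ a_k ≤ φ_k for all k. Set Φ(N) := ∑_{k=1}^N φ_k and assume Φ(N) → ∞ as N → ∞. Suppose there is a constant K such that for all integers 1 ≤ m < n one has ∫_X ( ∑_{m ≤ k < n} (f_k(x) − a_k) )² dμ(x) ≤ K·∑_{m ≤ k < n} φ_k. Then for every δ > 0 and for μ-almost every x ∈ X, ∑_{k=1}^N f_k(x) = ∑_{k=1}^N a_k + O( Φ(N)^{1/2}·(log(Φ(N)+2))^{3/2+δ} + max_{1≤k≤N} a_k ) as N → ∞. -/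
open MeasureTheory Finset Filter

/-!
Reparametrise time by the cumulative variance `Φ N = ∑_{k ≤ N} φ k`: `hittingIndex φ i` is the
index just before `Φ` first reaches `i`, and `S i` is the centred sum up to that index, so that
increments of `S` have second moment at most `K` times the increment of `Φ`.

Writing `S i` as a telescoping sum along the binary expansion of `i`, each step is either zero or
one dyadic increment of `S`, so Cauchy–Schwarz gives `S i ^ 2 ≤ j * D j` for `i < 2 ^ j`, where
`D j` sums the squares of all dyadic increments of `S` below `2 ^ j` (Rademacher–Menshov).
Each dyadic level telescopes, so `∫ D j ≤ K j 2 ^ j`; by Markov and Borel–Cantelli, almost surely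
`D j ≤ 2 ^ j j ^ (2 + 2δ)` for all large `j`, i.e. `S i = O(i ^ (1/2) (log i) ^ (3/2 + δ))`.
Finally, since `f ≥ 0` and `0 ≤ a ≤ φ`, the centred sum at `N` is sandwiched between
`S ⌊Φ N⌋` and `S (⌊Φ N⌋ + 1)` up to one term `a k` with `k ≤ N` plus `1`.
-/

namespace Harman

def dyadicSquareSum (s : ℕ → ℝ) (j : ℕ) : ℝ :=
  ∑ t ∈ range j, ∑ r ∈ range (2 ^ (j - t)), (s (2 ^ t * (r + 1)) - s (2 ^ t * r)) ^ 2

lemma sub_eq_sum_dyadic (s : ℕ → ℝ) {i j : ℕ} (hi : i < 2 ^ j) :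
    s i - s 0 = ∑ t ∈ range j, (s (2 ^ t * (i / 2 ^ t)) - s (2 ^ t * (2 * (i / 2 ^ t / 2)))) := by
  have hstep (t : ℕ) : 2 ^ t * (2 * (i / 2 ^ t / 2)) = 2 ^ (t + 1) * (i / 2 ^ (t + 1)) := by
    rw [Nat.div_div_eq_div_mul, pow_succ]; ring
  simp only [hstep]
  rw [sum_range_sub' (fun t => s (2 ^ t * (i / 2 ^ t))), Nat.div_eq_of_lt hi]
  simp

lemma sq_dyadic_step_le (s : ℕ → ℝ) {q R : ℕ} (t : ℕ) (hq : q < R) :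
    (s (2 ^ t * q) - s (2 ^ t * (2 * (q / 2)))) ^ 2
      ≤ ∑ r ∈ range R, (s (2 ^ t * (r + 1)) - s (2 ^ t * r)) ^ 2 := by
  rcases Nat.even_or_odd' q with ⟨u, rfl | rfl⟩
  · rw [Nat.mul_div_cancel_left u two_pos, sub_self, sq, zero_mul]
    exact sum_nonneg fun _ _ => sq_nonneg _
  · have hu : (2 * u + 1) / 2 = u := by omega
    rw [hu]
    exact single_le_sum (f := fun r => (s (2 ^ t * (r + 1)) - s (2 ^ t * r)) ^ 2)
      (fun _ _ => sq_nonneg _) (mem_range.2 (by omega))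

lemma sq_sub_le_mul_dyadicSquareSum (s : ℕ → ℝ) {i j : ℕ} (hi : i < 2 ^ j) :
    (s i - s 0) ^ 2 ≤ j * dyadicSquareSum s j := by
  rw [sub_eq_sum_dyadic s hi]
  refine (sq_sum_le_card_mul_sum_sq).trans ?_
  rw [card_range, dyadicSquareSum]
  gcongr with t ht
  apply sq_dyadic_step_le
  rw [Nat.div_lt_iff_lt_mul (by positivity), ← pow_add, Nat.sub_add_cancel (mem_range.1 ht).le]
  exact hi

section Integral
variable {X : Type*} [MeasurableSpace X] {μ : Measure X}

lemma lintegral_dyadicSquareSum_le {s : ℕ → X → ℝ} (hs : ∀ n, Measurable (s n)) {g : ℕ → ℝ}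
    (hg : Monotone g) {K : ℝ} (hK : 0 ≤ K)
    (hinc : ∀ m n, m ≤ n → ∫⁻ x, ENNReal.ofReal ((s n x - s m x) ^ 2) ∂μ
      ≤ ENNReal.ofReal (K * (g n - g m))) (j : ℕ) :
    ∫⁻ x, ENNReal.ofReal (dyadicSquareSum (s · x) j) ∂μ
      ≤ ENNReal.ofReal (K * j * (g (2 ^ j) - g 0)) := by
  have hlevel (t : ℕ) (ht : t ∈ range j) :
      ∑ r ∈ range (2 ^ (j - t)),
          ∫⁻ x, ENNReal.ofReal ((s (2 ^ t * (r + 1)) x - s (2 ^ t * r) x) ^ 2) ∂μ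
        ≤ ENNReal.ofReal (K * (g (2 ^ j) - g 0)) := by
    have hmono (r : ℕ) : 2 ^ t * r ≤ 2 ^ t * (r + 1) := Nat.mul_le_mul_left _ r.le_succ
    calc _ ≤ ∑ r ∈ range (2 ^ (j - t)),
            ENNReal.ofReal (K * (g (2 ^ t * (r + 1)) - g (2 ^ t * r))) :=
          sum_le_sum fun r _ => hinc _ _ (hmono r)
      _ = ENNReal.ofReal (K * (g (2 ^ t * 2 ^ (j - t)) - g (2 ^ t * 0))) := by
          rw [← ENNReal.ofReal_sum_of_nonneg fun r _ => mul_nonneg hK (sub_nonneg.2 (hg (hmono r))),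
            ← mul_sum, sum_range_sub (fun r => g (2 ^ t * r))]
      _ = ENNReal.ofReal (K * (g (2 ^ j) - g 0)) := by
          rw [← pow_add, Nat.add_sub_cancel' (mem_range.1 ht).le, mul_zero]
  calc ∫⁻ x, ENNReal.ofReal (dyadicSquareSum (s · x) j) ∂μ
      = ∑ t ∈ range j, ∑ r ∈ range (2 ^ (j - t)),
          ∫⁻ x, ENNReal.ofReal ((s (2 ^ t * (r + 1)) x - s (2 ^ t * r) x) ^ 2) ∂μ := by
        simp only [dyadicSquareSum]
        simp_rw [ENNReal.ofReal_sum_of_nonneg (fun _ _ => sum_nonneg fun _ _ => sq_nonneg _),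
          ENNReal.ofReal_sum_of_nonneg (fun _ _ => sq_nonneg _)]
        rw [lintegral_finsetSum _ fun t _ => by fun_prop]
        exact sum_congr rfl fun t _ => lintegral_finsetSum _ fun r _ => by fun_prop
    _ ≤ ∑ t ∈ range j, ENNReal.ofReal (K * (g (2 ^ j) - g 0)) := sum_le_sum hlevel
    _ = ENNReal.ofReal (K * j * (g (2 ^ j) - g 0)) := by
        rw [sum_const, card_range, nsmul_eq_mul, ← ENNReal.ofReal_natCast,
          ← ENNReal.ofReal_mul (Nat.cast_nonneg j)]
        ring_nf

lemma ae_eventually_le_of_lintegral_le {D : ℕ → X → ℝ} (hD : ∀ j, Measurable (D j))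
    {c ε : ℕ → ℝ} (hc : ∀ j, 0 < c j) (hε : Summable ε)
    (hint : ∀ j, ∫⁻ x, ENNReal.ofReal (D j x) ∂μ ≤ ENNReal.ofReal (c j * ε j)) :
    ∀ᵐ x ∂μ, ∀ᶠ j in atTop, D j x ≤ c j := by
  have hmarkov (j : ℕ) : μ {x | c j < D j x} ≤ ENNReal.ofReal |ε j| :=
    calc μ {x | c j < D j x} ≤ μ {x | ENNReal.ofReal (c j) ≤ ENNReal.ofReal (D j x)} :=
          measure_mono fun x hx => ENNReal.ofReal_le_ofReal (le_of_lt hx)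
      _ ≤ (∫⁻ x, ENNReal.ofReal (D j x) ∂μ) / ENNReal.ofReal (c j) :=
          meas_ge_le_lintegral_div (hD j).ennreal_ofReal.aemeasurable
            (by simpa using hc j) ENNReal.ofReal_ne_top
      _ ≤ ENNReal.ofReal (c j * ε j) / ENNReal.ofReal (c j) := by gcongr; exact hint j
      _ = ENNReal.ofReal (ε j) := by
          rw [← ENNReal.ofReal_div_of_pos (hc j), mul_div_cancel_left₀ _ (hc j).ne']
      _ ≤ ENNReal.ofReal |ε j| := ENNReal.ofReal_le_ofReal (le_abs_self _)
  have hsum : ∑' j, μ {x | c j < D j x} ≠ ⊤ := by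
    refine ne_top_of_le_ne_top ?_ (ENNReal.tsum_le_tsum hmarkov)
    rw [← ENNReal.ofReal_tsum_of_nonneg (fun _ => abs_nonneg _) hε.abs]
    exact ENNReal.ofReal_ne_top
  filter_upwards [ae_eventually_notMem hsum] with x hx
  simpa using hx

lemma ae_eventually_dyadicSquareSum_le {s : ℕ → X → ℝ} (hs : ∀ n, Measurable (s n))
    {g : ℕ → ℝ} (hg : Monotone g) (hg_le : ∀ n, g n - g 0 ≤ n) {K : ℝ} (hK : 0 ≤ K)
    (hinc : ∀ m n, m ≤ n → ∫⁻ x, ENNReal.ofReal ((s n x - s m x) ^ 2) ∂μ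
      ≤ ENNReal.ofReal (K * (g n - g m))) {β : ℝ} (hβ : 3 / 2 < β) :
    ∀ᵐ x ∂μ, ∀ᶠ n in atTop,
      dyadicSquareSum (s · x) (n + 1) ≤ 2 ^ (n + 1) * ((n + 1 : ℕ) : ℝ) ^ (2 * β - 1) := by
  have hε : Summable fun n : ℕ => K * (((n + 1 : ℕ) : ℝ) ^ (2 * β - 2))⁻¹ :=
    ((summable_nat_add_iff 1).2 (Real.summable_nat_rpow_inv.2 (by linarith))).mul_left K
  refine ae_eventually_le_of_lintegral_le (fun n => ?_) (fun n => by positivity) hε fun n => ?_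
  · simp only [dyadicSquareSum]
    fun_prop
  have hn : (0 : ℝ) < ((n + 1 : ℕ) : ℝ) := by positivity
  have hcε : 2 ^ (n + 1) * ((n + 1 : ℕ) : ℝ) ^ (2 * β - 1)
      * (K * (((n + 1 : ℕ) : ℝ) ^ (2 * β - 2))⁻¹) = K * ((n + 1 : ℕ) : ℝ) * 2 ^ (n + 1) := by
    rw [show 2 * β - 1 = (2 * β - 2) + 1 by ring, Real.rpow_add_one hn.ne']
    field_simp
  rw [hcε]
  refine (lintegral_dyadicSquareSum_le hs hg hK hinc (n + 1)).trans (ENNReal.ofReal_le_ofReal ?_)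
  have := hg_le (2 ^ (n + 1))
  push_cast at this ⊢
  gcongr

end Integral

noncomputable def powLog (α β y : ℝ) : ℝ := y ^ α * Real.log (y + 2) ^ β

section PowLog
variable {α β y z : ℝ}

lemma powLog_le_powLog (hα : 0 ≤ α) (hβ : 0 ≤ β) (hy : 0 ≤ y) (hyz : y ≤ z) :
    powLog α β y ≤ powLog α β z := by
  have hlog : 0 ≤ Real.log (y + 2) := Real.log_nonneg (by linarith)
  exact mul_le_mul (Real.rpow_le_rpow hy hyz hα)
    (Real.rpow_le_rpow hlog (Real.log_le_log (by linarith) (by linarith)) hβ)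
    (by positivity) (Real.rpow_nonneg (hy.trans hyz) α)

lemma powLog_two_mul_le (hβ : 0 ≤ β) (hy : 0 ≤ y) :
    powLog α β (2 * y) ≤ 2 ^ (α + β) * powLog α β y := by
  have hlog : 0 ≤ Real.log (y + 2) := Real.log_nonneg (by linarith)
  have hlog2 : Real.log (2 * y + 2) ≤ 2 * Real.log (y + 2) := by
    rw [← Real.log_rpow (by linarith)]
    exact Real.log_le_log (by linarith) (by norm_num; nlinarith)
  calc powLog α β (2 * y) ≤ (2 * y) ^ α * (2 * Real.log (y + 2)) ^ β := by
        unfold powLog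
        gcongr
        exact Real.log_nonneg (by linarith)
    _ = 2 ^ (α + β) * powLog α β y := by
        rw [powLog, Real.mul_rpow (by norm_num) hy, Real.mul_rpow (by norm_num) hlog,
          Real.rpow_add two_pos]
        ring

lemma one_le_powLog (hα : 0 ≤ α) (hβ : 0 ≤ β) (hy : 1 ≤ y) : 1 ≤ powLog α β y := by
  have hlog : 1 ≤ Real.log (y + 2) := by
    rw [Real.le_log_iff_exp_le (by linarith)]
    linarith [Real.exp_one_lt_three]
  exact one_le_mul_of_one_le_of_one_le (Real.one_le_rpow hy hα) (Real.one_le_rpow hlog hβ)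

lemma rpow_mul_rpow_log_two_le_powLog (hβ : 0 ≤ β) (j : ℕ) :
    ((2 : ℝ) ^ j) ^ α * (j * Real.log 2) ^ β ≤ powLog α β (2 ^ j) := by
  rw [powLog, ← Real.log_pow]
  exact mul_le_mul_of_nonneg_left (Real.rpow_le_rpow (Real.log_nonneg (one_le_pow₀ one_le_two))
    (Real.log_le_log (by positivity) (by linarith)) hβ) (by positivity)

end PowLog

lemma abs_le_powLog_of_dyadicSquareSum_le {s : ℕ → ℝ} (hs0 : s 0 = 0) {β : ℝ} (hβ : 0 ≤ β)
    {i : ℕ} (hi : i ≠ 0)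
    (hD : dyadicSquareSum s (Nat.log 2 i + 1)
      ≤ 2 ^ (Nat.log 2 i + 1) * ((Nat.log 2 i + 1 : ℕ) : ℝ) ^ (2 * β - 1)) :
    |s i| ≤ 2 ^ (1 / 2 + β) / Real.log 2 ^ β * powLog (1 / 2) β i := by
  set J := Nat.log 2 i + 1
  have hiJ : i < 2 ^ J := Nat.lt_pow_succ_log_self one_lt_two i
  have hJi : (2 : ℝ) ^ J ≤ 2 * i := by
    have : 2 ^ J ≤ 2 * i := by
      rw [pow_succ, mul_comm]; exact Nat.mul_le_mul_left 2 (Nat.pow_log_le_self 2 hi)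
    exact_mod_cast this
  have hJ : (0 : ℝ) < J := by positivity
  have hlog2 : 0 < Real.log 2 ^ β := Real.rpow_pos_of_pos (Real.log_pos one_lt_two) β
  set B : ℝ := ((2 : ℝ) ^ J) ^ (1 / 2 : ℝ) * (J : ℝ) ^ β with hB
  have hsq : s i ^ 2 ≤ B ^ 2 := by
    have hchain := sq_sub_le_mul_dyadicSquareSum s hiJ
    rw [hs0, sub_zero] at hchain
    calc s i ^ 2 ≤ J * (2 ^ J * (J : ℝ) ^ (2 * β - 1)) := hchain.trans (by gcongr)
      _ = 2 ^ J * (J : ℝ) ^ (2 * β) := by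
        rw [Real.rpow_sub_one hJ.ne']
        field_simp
      _ = B ^ 2 := by
        rw [hB, mul_pow, ← Real.sqrt_eq_rpow, Real.sq_sqrt (by positivity),
          ← Real.rpow_mul_natCast hJ.le, Nat.cast_two, mul_comm β]
  calc |s i| ≤ B := abs_le_of_sq_le_sq hsq (by positivity)
    _ = ((2 : ℝ) ^ J) ^ (1 / 2 : ℝ) * (J * Real.log 2) ^ β / Real.log 2 ^ β := by
        rw [hB, Real.mul_rpow hJ.le (Real.log_nonneg one_le_two)]
        field_simp
    _ ≤ powLog (1 / 2) β (2 * i) / Real.log 2 ^ β := by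
        gcongr
        exact (rpow_mul_rpow_log_two_le_powLog hβ J).trans
          (powLog_le_powLog (by norm_num) hβ (by positivity) hJi)
    _ ≤ 2 ^ (1 / 2 + β) * powLog (1 / 2) β i / Real.log 2 ^ β := by
        gcongr
        exact powLog_two_mul_le hβ (Nat.cast_nonneg i)
    _ = 2 ^ (1 / 2 + β) / Real.log 2 ^ β * powLog (1 / 2) β i := by ring

lemma eventually_abs_le_powLog {s : ℕ → ℝ} (hs0 : s 0 = 0) {β : ℝ} (hβ : 0 ≤ β)
    (hD : ∀ᶠ n in atTop,
      dyadicSquareSum s (n + 1) ≤ 2 ^ (n + 1) * ((n + 1 : ℕ) : ℝ) ^ (2 * β - 1)) :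
    ∀ᶠ i in atTop, |s i| ≤ 2 ^ (1 / 2 + β) / Real.log 2 ^ β * powLog (1 / 2) β i := by
  obtain ⟨J, hJ⟩ := eventually_atTop.1 hD
  filter_upwards [eventually_ge_atTop (2 ^ J)] with i hi
  exact abs_le_powLog_of_dyadicSquareSum_le hs0 hβ ((Nat.two_pow_pos J).trans_le hi).ne'
    (hJ _ (Nat.le_log_of_pow_le one_lt_two hi))

def cumSum (u : ℕ → ℝ) (N : ℕ) : ℝ := ∑ k ∈ Icc 1 N, u k

section CumSum
variable {u a φ : ℕ → ℝ}

@[simp] lemma cumSum_zero (u : ℕ → ℝ) : cumSum u 0 = 0 := by simp [cumSum]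

lemma cumSum_sub_cumSum (u : ℕ → ℝ) {m n : ℕ} (h : m ≤ n) :
    cumSum u n - cumSum u m = ∑ k ∈ Ioc m n, u k := by
  have hIcc (N : ℕ) : Icc 1 N = Ioc 0 N := Icc_add_one_left_eq_Ioc 0 N
  rw [cumSum, cumSum, hIcc, hIcc, ← sum_Ioc_consecutive u (Nat.zero_le m) h, add_sub_cancel_left]

lemma cumSum_mono (hu : ∀ k, 0 ≤ u k) : Monotone (cumSum u) := fun _ _ h =>
  sum_le_sum_of_subset_of_nonneg (Icc_subset_Icc_right h) fun k _ _ => hu k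

lemma cumSum_nonneg (hu : ∀ k, 0 ≤ u k) (N : ℕ) : 0 ≤ cumSum u N :=
  sum_nonneg fun k _ => hu k

lemma cumSum_sub_cumSum_le (hau : ∀ k, a k ≤ u k) {m n : ℕ} (h : m ≤ n) :
    cumSum a n - cumSum a m ≤ cumSum u n - cumSum u m := by
  rw [cumSum_sub_cumSum a h, cumSum_sub_cumSum u h]
  exact sum_le_sum fun k _ => hau k

lemma abs_sub_le_max_add {U B : ℕ → ℝ} (hU : Monotone U) (hB : Monotone B) {p n q : ℕ}
    (hpn : p ≤ n) (hnq : n ≤ q) :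
    |U n - B n| ≤ max |U p - B p| |U q - B q| + (B q - B p) := by
  rw [abs_le]
  constructor <;> linarith [hU hpn, hU hnq, hB hpn, hB hnq, neg_abs_le (U p - B p),
    le_abs_self (U q - B q), le_max_left |U p - B p| |U q - B q|,
    le_max_right |U p - B p| |U q - B q|]

noncomputable def hittingIndex (φ : ℕ → ℝ) (i : ℕ) : ℕ := sInf {L | (i : ℝ) ≤ cumSum φ (L + 1)}

lemma hittingIndex_le {i L : ℕ} (h : (i : ℝ) ≤ cumSum φ (L + 1)) : hittingIndex φ i ≤ L :=
  Nat.sInf_le h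

lemma le_cumSum_hittingIndex_add_one (hΦ : Tendsto (cumSum φ) atTop atTop)
    (i : ℕ) : (i : ℝ) ≤ cumSum φ (hittingIndex φ i + 1) := by
  obtain ⟨N, hN⟩ := eventually_atTop.1 (hΦ.eventually_ge_atTop (i : ℝ))
  exact Nat.sInf_mem (s := {L | (i : ℝ) ≤ cumSum φ (L + 1)}) ⟨N, hN _ N.le_succ⟩

lemma cumSum_hittingIndex_le (φ : ℕ → ℝ) (i : ℕ) : cumSum φ (hittingIndex φ i) ≤ i := by
  rcases h : hittingIndex φ i with _ | L
  · simp
  · have hL : L < sInf {L | (i : ℝ) ≤ cumSum φ (L + 1)} := by rw [← hittingIndex, h]; omega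
    have hL' : L ∉ {L | (i : ℝ) ≤ cumSum φ (L + 1)} := Nat.notMem_of_lt_sInf hL
    exact (not_le.1 hL').le

lemma hittingIndex_mono (hΦ : Tendsto (cumSum φ) atTop atTop) :
    Monotone (hittingIndex φ) := fun _ i' h =>
  hittingIndex_le ((Nat.cast_le.2 h).trans (le_cumSum_hittingIndex_add_one hΦ i'))

lemma hittingIndex_zero (hφ : ∀ k, 0 ≤ φ k) : hittingIndex φ 0 = 0 :=
  Nat.sInf_eq_zero.2 (Or.inl (by simpa using cumSum_nonneg hφ 1))

lemma hittingIndex_lt {i N : ℕ} (hN : N ≠ 0) (h : (i : ℝ) ≤ cumSum φ N) :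
    hittingIndex φ i < N := by
  obtain ⟨M, rfl⟩ := Nat.exists_eq_succ_of_ne_zero hN
  exact Nat.lt_succ_of_le (hittingIndex_le h)

lemma le_hittingIndex (hφ : ∀ k, 0 ≤ φ k)
    (hΦ : Tendsto (cumSum φ) atTop atTop) {i N : ℕ} (h : cumSum φ N < i) :
    N ≤ hittingIndex φ i := by
  by_contra! hlt
  exact h.not_ge ((le_cumSum_hittingIndex_add_one hΦ i).trans (cumSum_mono hφ hlt))

lemma cumSum_hittingIndex_succ_sub_le (haφ : ∀ k, a k ≤ φ k)
    (hΦ : Tendsto (cumSum φ) atTop atTop) {i : ℕ}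
    (hlt : hittingIndex φ i < hittingIndex φ (i + 1)) :
    cumSum a (hittingIndex φ (i + 1)) - cumSum a (hittingIndex φ i)
      ≤ a (hittingIndex φ i + 1) + 1 := by
  set p := hittingIndex φ i
  have hfirst : cumSum a (p + 1) - cumSum a p = a (p + 1) := by
    rw [cumSum_sub_cumSum a p.le_succ, Nat.Ioc_succ_singleton, sum_singleton]
  have hrest := cumSum_sub_cumSum_le haφ (Nat.succ_le_of_lt hlt)
  have hq := cumSum_hittingIndex_le φ (i + 1)
  have hp := le_cumSum_hittingIndex_add_one hΦ i
  push_cast at hq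
  linarith

lemma abs_cumSum_sub_cumSum_le (hu : ∀ k, 0 ≤ u k) (ha : ∀ k, 0 ≤ a k) (haφ : ∀ k, a k ≤ φ k)
    (hΦ : Tendsto (cumSum φ) atTop atTop) {i N : ℕ} (hN : N ≠ 0)
    (hiN : (i : ℝ) ≤ cumSum φ N) (hNi : cumSum φ N < i + 1) :
    |cumSum u N - cumSum a N|
      ≤ max |cumSum (fun k => u k - a k) (hittingIndex φ i)|
          |cumSum (fun k => u k - a k) (hittingIndex φ (i + 1))|
        + a (hittingIndex φ i + 1) + 1 := by
  have hp : hittingIndex φ i < N := hittingIndex_lt hN hiN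
  have hq : N ≤ hittingIndex φ (i + 1) :=
    le_hittingIndex (fun k => (ha k).trans (haφ k)) hΦ (by push_cast; exact hNi)
  have hsub (M : ℕ) : cumSum (fun k => u k - a k) M = cumSum u M - cumSum a M :=
    sum_sub_distrib _ _
  simp only [hsub]
  have := abs_sub_le_max_add (cumSum_mono hu) (cumSum_mono ha) hp.le hq
  have := cumSum_hittingIndex_succ_sub_le haφ hΦ (hp.trans_le hq)
  linarith

lemma exists_abs_cumSum_sub_le (hu : ∀ k, 0 ≤ u k) (ha : ∀ k, 0 ≤ a k) (haφ : ∀ k, a k ≤ φ k)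
    (hΦ : Tendsto (cumSum φ) atTop atTop) {α β C : ℝ} (hα : 0 ≤ α)
    (hβ : 0 ≤ β) (hC : 0 ≤ C)
    (hS : ∀ᶠ i in atTop,
      |cumSum (fun k => u k - a k) (hittingIndex φ i)| ≤ C * powLog α β i) :
    ∃ C' > (0 : ℝ), ∃ N₀ : ℕ, ∃ hN₀ : 1 ≤ N₀, ∀ N : ℕ, ∀ hN : N₀ ≤ N,
      |cumSum u N - cumSum a N|
        ≤ C' * (powLog α β (cumSum φ N) + (Icc 1 N).sup' (nonempty_Icc.mpr (hN₀.trans hN)) a) := by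
  obtain ⟨I, hI⟩ := eventually_atTop.1 hS
  obtain ⟨N₁, hN₁⟩ := eventually_atTop.1 (hΦ.eventually_ge_atTop ((I : ℝ) + 1))
  refine ⟨C * 2 ^ (α + β) + 1, by positivity, max N₁ 1, le_max_right _ _, fun N hN => ?_⟩
  have hN0 : N ≠ 0 := by omega
  set Φ := cumSum φ N
  have hΦI : (I : ℝ) + 1 ≤ Φ := hN₁ N (le_of_max_le_left hN)
  set i := ⌊Φ⌋₊
  have hiΦ : (i : ℝ) ≤ Φ := Nat.floor_le (by linarith [(Nat.cast_nonneg I : (0 : ℝ) ≤ I)])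
  have hIi : I ≤ i := Nat.le_floor (by linarith)
  have hψ : powLog α β (i + 1) ≤ 2 ^ (α + β) * powLog α β Φ :=
    (powLog_le_powLog hα hβ (by positivity) (by linarith)).trans
      (powLog_two_mul_le hβ (by linarith))
  have hmax : max |cumSum (fun k => u k - a k) (hittingIndex φ i)|
      |cumSum (fun k => u k - a k) (hittingIndex φ (i + 1))| ≤ C * powLog α β (i + 1) := by
    refine max_le ((hI i hIi).trans ?_) (by exact_mod_cast hI (i + 1) (by omega))
    exact mul_le_mul_of_nonneg_left (powLog_le_powLog hα hβ (by positivity) (by linarith)) hC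
  have hsup : a (hittingIndex φ i + 1) ≤ (Icc 1 N).sup' (nonempty_Icc.mpr (by omega)) a :=
    le_sup' a (mem_Icc.2 ⟨by omega, hittingIndex_lt hN0 hiΦ⟩)
  have hsup0 : 0 ≤ (Icc 1 N).sup' (nonempty_Icc.mpr (by omega)) a :=
    (ha 1).trans (le_sup' a (mem_Icc.2 ⟨le_rfl, by omega⟩))
  have hone : 1 ≤ powLog α β Φ := one_le_powLog hα hβ (by linarith)
  have := abs_cumSum_sub_cumSum_le hu ha haφ hΦ hN0 hiΦ (Nat.lt_floor_add_one Φ)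
  have := mul_le_mul_of_nonneg_left hψ hC
  nlinarith [mul_nonneg (mul_nonneg hC (Real.rpow_nonneg zero_le_two (α + β))) hsup0]

end CumSum

section Variance
variable {X : Type*} [MeasurableSpace X] {μ : Measure X}

lemma lintegral_sq_cumSum_sub_le {f : ℕ → X → ℝ} {a φ : ℕ → ℝ} (hφ : ∀ k, 0 ≤ φ k) {K : ℝ}
    (hvar : ∀ m n : ℕ, 1 ≤ m → m < n →
      ∫⁻ x, ENNReal.ofReal ((∑ k ∈ Ico m n, (f k x - a k)) ^ 2) ∂μ
        ≤ ENNReal.ofReal (K * ∑ k ∈ Ico m n, φ k)) {p q : ℕ} (h : p ≤ q) :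
    ∫⁻ x, ENNReal.ofReal
        ((cumSum (fun k => f k x - a k) q - cumSum (fun k => f k x - a k) p) ^ 2) ∂μ
      ≤ ENNReal.ofReal (max K 0 * (cumSum φ q - cumSum φ p)) := by
  simp only [cumSum_sub_cumSum _ h, ← Ico_add_one_add_one_eq_Ioc]
  rcases h.eq_or_lt with rfl | hlt
  · simp
  · refine (hvar _ _ (Nat.le_add_left 1 p) (by omega)).trans (ENNReal.ofReal_le_ofReal ?_)
    exact mul_le_mul_of_nonneg_right (le_max_left K 0) (sum_nonneg fun k _ => hφ k)

end Variance

end Harman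

open Harman in
theorem harman_mean_variance_general {X : Type*} [MeasurableSpace X] (μ : Measure X)
    (f : ℕ → X → ℝ) (hmeas : ∀ k, Measurable (f k)) (hnonneg : ∀ k x, 0 ≤ f k x)
    (a φ : ℕ → ℝ) (ha0 : ∀ k, 0 ≤ a k) (haφ : ∀ k, a k ≤ φ k)
    (hΦ : Filter.Tendsto (fun N => ∑ k ∈ Finset.Icc 1 N, φ k)
      Filter.atTop Filter.atTop)
    (K : ℝ)
    (hvar : ∀ m n : ℕ, 1 ≤ m → m < n →
      ∫⁻ x, ENNReal.ofReal ((∑ k ∈ Finset.Ico m n, (f k x - a k)) ^ 2) ∂μ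
        ≤ ENNReal.ofReal (K * ∑ k ∈ Finset.Ico m n, φ k))
    (δ : ℝ) (hδ : 0 < δ) :
    ∀ᵐ x ∂μ, ∃ C > (0:ℝ), ∃ N₀ : ℕ, ∃ hN₀ : 1 ≤ N₀, ∀ N : ℕ, ∀ hN : N₀ ≤ N,
      |∑ k ∈ Finset.Icc 1 N, f k x - ∑ k ∈ Finset.Icc 1 N, a k|
        ≤ C * ((∑ k ∈ Finset.Icc 1 N, φ k) ^ ((1:ℝ)/2)
              * Real.log ((∑ k ∈ Finset.Icc 1 N, φ k) + 2) ^ (3/2 + δ)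
            + (Finset.Icc 1 N).sup' (Finset.nonempty_Icc.mpr (hN₀.trans hN)) a) := by
  have hφ (k : ℕ) : 0 ≤ φ k := (ha0 k).trans (haφ k)
  have hΦ' : Tendsto (cumSum φ) atTop atTop := hΦ
  have hdyadic := ae_eventually_dyadicSquareSum_le (μ := μ)
    (s := fun i x => cumSum (fun k => f k x - a k) (hittingIndex φ i))
    (g := fun i => cumSum φ (hittingIndex φ i))
    (fun i => by simp only [cumSum]; fun_prop)
    ((cumSum_mono hφ).comp (hittingIndex_mono hΦ'))
    (fun i => by linarith [cumSum_hittingIndex_le φ i, cumSum_nonneg hφ (hittingIndex φ 0)])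
    (le_max_right K 0) (fun _ _ h => lintegral_sq_cumSum_sub_le hφ hvar (hittingIndex_mono hΦ' h))
    (show (3 : ℝ) / 2 < 3 / 2 + δ by linarith)
  filter_upwards [hdyadic] with x hx
  have hS0 : cumSum (fun k => f k x - a k) (hittingIndex φ 0) = 0 := by
    rw [hittingIndex_zero hφ, cumSum_zero]
  exact exists_abs_cumSum_sub_le (fun k => hnonneg k x) ha0 haφ hΦ' (by norm_num) (by positivity)
    (by positivity) (eventually_abs_le_powLog hS0 (by positivity) hx)

/-- Harman's mean–variance lemma (Lemma 1.5 in Harman's book). -/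
theorem harman_mean_variance {X : Type*} [MeasurableSpace X] (μ : Measure X)
    (hpos : 0 < μ Set.univ) (hfin : μ Set.univ < ⊤)
    (f : ℕ → X → ℝ) (hmeas : ∀ k, Measurable (f k)) (hnonneg : ∀ k x, 0 ≤ f k x)
    (a φ : ℕ → ℝ) (ha0 : ∀ k, 0 ≤ a k) (haφ : ∀ k, a k ≤ φ k)
    (hΦ : Filter.Tendsto (fun N => ∑ k ∈ Finset.Icc 1 N, φ k)
      Filter.atTop Filter.atTop)
    (K : ℝ)
    (hvar : ∀ m n : ℕ, 1 ≤ m → m < n →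
      ∫⁻ x, ENNReal.ofReal ((∑ k ∈ Finset.Ico m n, (f k x - a k)) ^ 2) ∂μ
        ≤ ENNReal.ofReal (K * ∑ k ∈ Finset.Ico m n, φ k))
    (δ : ℝ) (hδ : 0 < δ) :
    ∀ᵐ x ∂μ, ∃ C > (0:ℝ), ∃ N₀ : ℕ, ∃ hN₀ : 1 ≤ N₀, ∀ N : ℕ, ∀ hN : N₀ ≤ N,
      |∑ k ∈ Finset.Icc 1 N, f k x - ∑ k ∈ Finset.Icc 1 N, a k|
        ≤ C * ((∑ k ∈ Finset.Icc 1 N, φ k) ^ ((1:ℝ)/2)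
              * Real.log ((∑ k ∈ Finset.Icc 1 N, φ k) + 2) ^ (3/2 + δ)
            + (Finset.Icc 1 N).sup' (Finset.nonempty_Icc.mpr (hN₀.trans hN)) a) :=
  harman_mean_variance_general μ f hmeas hnonneg a φ ha0 haφ hΦ K hvar δ hδ
end

section
/- Let ψ : ℕ → [0,1/2] be any function and γ ∈ ℝ arbitrary. If q, r ∈ ℤ²∖{0} are not parallel, then λ₂(A_q ∩ A_r) = λ₂(A_q)·λ₂(A_r). -/
open MeasureTheory

/-- The approximation set `A_q ⊆ 𝕋²` for a nonzero integer vector `q`: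
`A_q = {α : ‖q₁α₁ + q₂α₂ - γ‖ ≤ ψ(|q|)}`, `|q| = max(|q₁|,|q₂|)`. -/
noncomputable def ApproxSet (ψ : ℕ → ℝ) (γ : ℝ) (v : ℤ × ℤ) :
    Set (UnitAddCircle × UnitAddCircle) :=
  {α | ‖v.1 • α.1 + v.2 • α.2 - (γ : UnitAddCircle)‖ ≤ ψ (max v.1.natAbs v.2.natAbs)}

/-- Nonzero integer vectors `q, r` are parallel if `a•q = b•r` for some
integers `a, b` not both zero. -/
def IsParallel (q r : ℤ × ℤ) : Prop :=
  ∃ a b : ℤ, ¬(a = 0 ∧ b = 0) ∧ a • q = b • r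

/-!
For non-parallel `q, r` the determinant `d = q₁r₂ - q₂r₁` is nonzero, and the endomorphism
`α ↦ (q·α, r·α)` of `𝕋²` is surjective: composed with the adjugate it is multiplication by `d`,
which is onto because `𝕋²` is divisible. A continuous surjective endomorphism of a compact group
preserves Haar measure, so the joint law of `q·α` and `r·α` is the product of their (Haar) laws:
the two linear forms are independent, and `A_q`, `A_r` are their preimages of closed balls.
-/

open Function

lemma IsParallel.of_det_eq_zero {q r : ℤ × ℤ} (hd : q.1 * r.2 - q.2 * r.1 = 0) :
    IsParallel q r := by
  by_cases hq : q = 0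
  · exact ⟨1, 0, by simp, by simp [hq]⟩
  by_cases hq₁ : q.1 = 0
  · have hq₂ : q.2 ≠ 0 := fun hq₂ => hq (Prod.ext hq₁ hq₂)
    exact ⟨r.2, q.2, fun h => hq₂ h.2, Prod.ext (by simp; linarith) (by simp [mul_comm])⟩
  · exact ⟨r.1, q.1, fun h => hq₁ h.2, Prod.ext (by simp [mul_comm]) (by simp; linarith)⟩

namespace IntVec

variable {A : Type*} [AddCommGroup A]

def linearForm (v : ℤ × ℤ) : A × A →+ A :=
  (zsmulAddGroupHom v.1).coprod (zsmulAddGroupHom v.2)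

@[simp]
lemma linearForm_apply (v : ℤ × ℤ) (x : A × A) : linearForm v x = v.1 • x.1 + v.2 • x.2 := rfl

def linearPair (q r : ℤ × ℤ) : A × A →+ A × A :=
  (linearForm q).prod (linearForm r)

@[simp]
lemma linearPair_apply (q r : ℤ × ℤ) (x : A × A) :
    linearPair q r x = (linearForm q x, linearForm r x) := rfl

lemma linearPair_adjugate (q r : ℤ × ℤ) (x : A × A) :
    linearPair q r (linearPair (r.2, -q.2) (-r.1, q.1) x) = (q.1 * r.2 - q.2 * r.1) • x := by
  ext <;> simp only [linearPair_apply, linearForm_apply, Prod.smul_fst, Prod.smul_snd] <;> module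

lemma linearPair_surjective [DivisibleBy A ℤ] {q r : ℤ × ℤ}
    (hd : q.1 * r.2 - q.2 * r.1 ≠ 0) : Surjective (linearPair (A := A) q r) := fun y =>
  ⟨_, (linearPair_adjugate q r _).trans (DivisibleBy.div_cancel y hd)⟩

variable [TopologicalSpace A] [IsTopologicalAddGroup A]

lemma continuous_linearPair (q r : ℤ × ℤ) : Continuous (linearPair (A := A) q r) := by
  change Continuous fun x : A × A => (q.1 • x.1 + q.2 • x.2, r.1 • x.1 + r.2 • x.2)
  fun_prop

open ProbabilityTheory

variable [DivisibleBy A ℤ] [CompactSpace A] [SecondCountableTopology A]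
  [MeasurableSpace A] [BorelSpace A] {μ : Measure A} [μ.IsAddHaarMeasure] {q r : ℤ × ℤ}

lemma measurePreserving_linearPair (hd : q.1 * r.2 - q.2 * r.1 ≠ 0) :
    MeasurePreserving (linearPair q r) (μ.prod μ) (μ.prod μ) :=
  AddMonoidHom.measurePreserving (continuous_linearPair q r) (linearPair_surjective hd) rfl

lemma indepFun_linearForm [IsProbabilityMeasure μ] (hd : q.1 * r.2 - q.2 * r.1 ≠ 0) :
    IndepFun (linearForm q) (linearForm r) (μ.prod μ) := by
  have hfst : MeasurePreserving (linearForm (A := A) q) (μ.prod μ) μ :=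
    AddMonoidHom.measurePreserving (continuous_fst.comp (continuous_linearPair q r))
      (Prod.fst_surjective.comp (linearPair_surjective hd)) (by simp)
  have hsnd : MeasurePreserving (linearForm (A := A) r) (μ.prod μ) μ :=
    AddMonoidHom.measurePreserving (continuous_snd.comp (continuous_linearPair q r))
      (Prod.snd_surjective.comp (linearPair_surjective hd)) (by simp)
  rw [indepFun_iff_map_prod_eq_prod_map_map hfst.aemeasurable hsnd.aemeasurable, hfst.map_eq,
    hsnd.map_eq]
  exact (measurePreserving_linearPair hd).map_eq

end IntVec

instance : IsProbabilityMeasure (volume : Measure UnitAddCircle) :=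
  ⟨by simp [AddCircle.measure_univ]⟩

lemma approxSet_eq_preimage (ψ : ℕ → ℝ) (γ : ℝ) (v : ℤ × ℤ) :
    ApproxSet ψ γ v = IntVec.linearForm v ⁻¹'
      Metric.closedBall (γ : UnitAddCircle) (ψ (max v.1.natAbs v.2.natAbs)) := by
  ext α
  simp [ApproxSet, dist_eq_norm]

theorem nonparallel_independent_general (ψ : ℕ → ℝ) (γ : ℝ)
    (q r : ℤ × ℤ) (h : ¬ IsParallel q r) :
    volume (ApproxSet ψ γ q ∩ ApproxSet ψ γ r)
      = volume (ApproxSet ψ γ q) * volume (ApproxSet ψ γ r) := by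
  simp only [approxSet_eq_preimage]
  exact (IntVec.indepFun_linearForm (μ := volume) (mt IsParallel.of_det_eq_zero h))
    |>.measure_inter_preimage_eq_mul _ _ Metric.isClosed_closedBall.measurableSet
      Metric.isClosed_closedBall.measurableSet

/-- For non-parallel vectors, the sets `A_q` and `A_r` are independent. -/
theorem nonparallel_independent (ψ : ℕ → ℝ) (hψ0 : ∀ n, 0 ≤ ψ n)
    (hψ2 : ∀ n, ψ n ≤ 1/2) (γ : ℝ)
    (q r : ℤ × ℤ) (hq : q ≠ 0) (hr : r ≠ 0) (h : ¬ IsParallel q r) :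
    volume (ApproxSet ψ γ q ∩ ApproxSet ψ γ r)
      = volume (ApproxSet ψ γ q) * volume (ApproxSet ψ γ r) :=
  nonparallel_independent_general ψ γ q r h
end
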